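/- arXiv:1811.02133 — 3 statements merged into one kernel-verified Lean document; each statement's English description precedes it below -/
import Mathlib

section
/- Define F : ℕ → [0,1] → ℝ by F 0 p = 0 and F (m+1) p = p + (1-p)·(F m ((1+p)/2))³. Then for all n ≥ 2 and m ≥ 1, F m (1 - 1/2^n) ≥ 1 - 1/2^(n+m-1). -/
/-- The m-th Kleene approximation of the biased tree generator's
termination probability, as a function of the stopping probability `p`. -/
noncomputable def kleeneF : ℕ → ℝ → ℝ
  | 0, _ => 0
  | (m + 1), p => p + (1 - p) * (kleeneF m ((1 + p) / 2)) ^ 3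

theorem stmt_7 (n m : ℕ) (hn : 2 ≤ n) (hm : 1 ≤ m) :
    1 - 1 / 2 ^ (n + m - 1) ≤ kleeneF m (1 - 1 / 2 ^ n) := by
  induction m generalizing n with
  | zero => omega
  | succ m ih =>
    rcases Nat.eq_zero_or_pos m with rfl | hm'
    · simp [kleeneF]
    · have key : (1 + (1 - 1/2^n))/2 = (1:ℝ) - 1/2^(n+1) := by
        rw [pow_succ]
        have : (2:ℝ)^n ≠ 0 := by positivity
        field_simp
        ring
      have h := ih (n+1) (by omega) hm'
      rw [show n+1+m-1 = n+m from by omega] at h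
      show 1 - 1/2^(n+(m+1)-1) ≤
        (1 - 1/2^n) + (1 - (1 - 1/2^n)) * (kleeneF m ((1 + (1 - 1/2^n))/2))^3
      rw [show n+(m+1)-1 = n+m from by omega, key]
      set x := kleeneF m (1 - 1/2^(n+1)) with hx
      set ε := (1:ℝ)/2^(n+m) with hεdef
      have hpos : (0:ℝ) < 2^(n+m) := by positivity
      have hεpos : (0:ℝ) < ε := by rw [hεdef]; positivity
      have hε1 : ε ≤ 1 := by
        rw [hεdef, div_le_one hpos]
        exact one_le_pow₀ (by norm_num)
      have hε0 : (0:ℝ) ≤ 1 - ε := by linarith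
      have hx3 : (1 - ε)^3 ≤ x^3 := pow_le_pow_left₀ hε0 h 3
      have h2n : (4:ℝ) ≤ 2^n := by
        calc (4:ℝ) = 2^2 := by norm_num
        _ ≤ 2^n := pow_le_pow_right₀ (by norm_num) hn
      have h2npos : (0:ℝ) < 2^n := by positivity
      have hinvn : (0:ℝ) < 1/2^n := by positivity
      have hstep : (1:ℝ) - ε ≤ (1 - 1/2^n) + (1/2^n) * (1 - ε)^3 := by
        have hu : (1:ℝ)/2^n ≤ 1/4 := by
          rw [div_le_div_iff₀ h2npos (by norm_num)]; linarith
        have hb : 3 - 3*ε + ε^2 ≤ 4 := by nlinarith [sq_nonneg ε]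
        have hb0 : 0 ≤ 3 - 3*ε + ε^2 := by nlinarith [sq_nonneg ε]
        have hmul : (1:ℝ)/2^n * (3 - 3*ε + ε^2) ≤ 1 := by
          calc (1:ℝ)/2^n * (3 - 3*ε + ε^2) ≤ (1/4) * 4 :=
                mul_le_mul hu hb hb0 (by norm_num)
            _ = 1 := by norm_num
        have hq : 0 ≤ ε * (1 - (1/2^n) * (3 - 3*ε + ε^2)) :=
          mul_nonneg hεpos.le (by linarith)
        nlinarith [hq]
      calc (1:ℝ) - ε ≤ (1 - 1/2^n) + (1/2^n) * (1 - ε)^3 := hstep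
        _ ≤ (1 - 1/2^n) + (1 - (1 - 1/2^n)) * x^3 := by
            have he : (1:ℝ) - (1 - 1/2^n) = 1/2^n := by ring
            rw [he]
            have := mul_le_mul_of_nonneg_left hx3 (le_of_lt hinvn)
            linarith
end

section
/- With F as above (F 0 p = 0, F (m+1) p = p + (1-p)·(F m ((1+p)/2))³), the supremum over m of F m (1/2) equals 1. -/
lemma kleeneF_bounds : ∀ (m : ℕ) (p : ℝ), 0 ≤ p → p ≤ 1 →
    0 ≤ kleeneF m p ∧ kleeneF m p ≤ 1 := by
  intro m
  induction m with
  | zero => intro p _ _; simp [kleeneF]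
  | succ m ih =>
    intro p hp0 hp1
    have hq0 : (0:ℝ) ≤ (1 + p) / 2 := by linarith
    have hq1 : (1 + p) / 2 ≤ 1 := by linarith
    obtain ⟨h0, h1⟩ := ih ((1 + p) / 2) hq0 hq1
    have hx0 : 0 ≤ (kleeneF m ((1 + p) / 2)) ^ 3 := by positivity
    have hx1 : (kleeneF m ((1 + p) / 2)) ^ 3 ≤ 1 := pow_le_one₀ h0 h1
    constructor
    · show 0 ≤ p + (1 - p) * (kleeneF m ((1 + p) / 2)) ^ 3
      nlinarith
    · show p + (1 - p) * (kleeneF m ((1 + p) / 2)) ^ 3 ≤ 1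
      nlinarith

lemma kleeneF_key : ∀ (m : ℕ) (p : ℝ), 0 ≤ p → p ≤ 1 →
    1 - kleeneF m p ≤ (3 * (1 - p)) ^ m / 2 ^ (m.choose 2) := by
  intro m
  induction m with
  | zero => intro p _ _; simp [kleeneF]
  | succ m ih =>
    intro p hp0 hp1
    have hq0 : (0:ℝ) ≤ (1 + p) / 2 := by linarith
    have hq1 : (1 + p) / 2 ≤ 1 := by linarith
    obtain ⟨hx0, hx1⟩ := kleeneF_bounds m ((1 + p) / 2) hq0 hq1
    set x := kleeneF m ((1 + p) / 2) with hxdef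
    have IH := ih ((1 + p) / 2) hq0 hq1
    have hrw : (3 * (1 - (1 + p) / 2)) ^ m = (3 * (1 - p)) ^ m / 2 ^ m := by
      have h : 3 * (1 - (1 + p) / 2) = (3 * (1 - p)) / 2 := by ring
      rw [h, div_pow]
    rw [hrw] at IH
    have hchoose : (m + 1).choose 2 = m.choose 2 + m := by
      rw [Nat.choose_succ_succ]
      simp [Nat.choose_one_right, Nat.add_comm]
    have h1p : (0:ℝ) ≤ 1 - p := by linarith
    have hA : (0:ℝ) ≤ (3 * (1 - p)) ^ m := pow_nonneg (by linarith) m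
    have h2c : (0:ℝ) < 2 ^ (m.choose 2) := by positivity
    have h2m : (0:ℝ) < 2 ^ m := by positivity
    have hx3 : 1 - x ^ 3 ≤ 3 * (1 - x) := by nlinarith [sq_nonneg (x - 1)]
    show 1 - (p + (1 - p) * x ^ 3) ≤ (3 * (1 - p)) ^ (m + 1) / 2 ^ ((m+1).choose 2)
    have step1 : 1 - (p + (1 - p) * x ^ 3) ≤ 3 * (1 - p) * (1 - x) := by nlinarith
    have step2 : 3 * (1 - p) * (1 - x) ≤
        3 * (1 - p) * ((3 * (1 - p)) ^ m / 2 ^ m / 2 ^ (m.choose 2)) :=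
      mul_le_mul_of_nonneg_left IH (by linarith)
    have heq : (3 * (1 - p)) ^ (m + 1) / 2 ^ ((m+1).choose 2) =
        3 * (1 - p) * ((3 * (1 - p)) ^ m / 2 ^ m / 2 ^ (m.choose 2)) := by
      rw [hchoose, pow_succ, pow_add]
      field_simp
    rw [heq]
    linarith

theorem stmt_8 : (⨆ m : ℕ, kleeneF m (1/2)) = 1 := by
  have h_le : ∀ m : ℕ, kleeneF m (1/2) ≤ 1 := fun m =>
    (kleeneF_bounds m (1/2) (by norm_num) (by norm_num)).2
  have hbdd : BddAbove (Set.range fun m : ℕ => kleeneF m (1/2)) :=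
    ⟨1, by rintro y ⟨m, rfl⟩; exact h_le m⟩
  have h_ge : ∀ m : ℕ, 1 - 2 * (3/4 : ℝ) ^ m ≤ kleeneF m (1/2) := by
    intro m
    have hkey := kleeneF_key m (1/2) (by norm_num) (by norm_num)
    have hrw0 : (3:ℝ) * (1 - 1/2) = 3/2 := by norm_num
    rw [hrw0] at hkey
    have hc : m ≤ m.choose 2 + 1 := by
      induction m with
      | zero => simp
      | succ n ihn =>
        have h1 := Nat.choose_succ_succ n 1
        simp [Nat.choose_one_right] at h1
        omega
    have h2 : (2:ℝ) ^ m ≤ 2 * 2 ^ (m.choose 2) := by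
      calc (2:ℝ) ^ m ≤ 2 ^ (m.choose 2 + 1) := pow_le_pow_right₀ (by norm_num) hc
        _ = 2 * 2 ^ (m.choose 2) := by rw [pow_succ]; ring
    have h34 : (3/4 : ℝ) ^ m = (3/2 : ℝ) ^ m / 2 ^ m := by
      have h : (3/4 : ℝ) = (3/2) / 2 := by norm_num
      rw [h, div_pow]
    have hfrac : (3/2 : ℝ) ^ m / 2 ^ (m.choose 2) ≤ 2 * (3/4 : ℝ) ^ m := by
      rw [h34, ← mul_div_assoc,
        div_le_div_iff₀ (by positivity) (by positivity)]
      have hpos : (0:ℝ) ≤ (3/2:ℝ) ^ m := by positivity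
      nlinarith [mul_le_mul_of_nonneg_left h2 hpos]
    linarith [hkey.trans hfrac]
  have hlim : Filter.Tendsto (fun m : ℕ => kleeneF m (1/2)) Filter.atTop (nhds 1) := by
    have hlow : Filter.Tendsto (fun m : ℕ => 1 - 2 * (3/4 : ℝ) ^ m) Filter.atTop (nhds 1) := by
      have h0 : Filter.Tendsto (fun m : ℕ => (3/4 : ℝ) ^ m) Filter.atTop (nhds 0) :=
        tendsto_pow_atTop_nhds_zero_of_lt_one (by norm_num) (by norm_num)
      have := ((h0.const_mul 2).const_sub 1)
      simpa using this
    exact tendsto_of_tendsto_of_tendsto_of_le_of_le hlow tendsto_const_nhds h_ge h_le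
  refine le_antisymm (ciSup_le h_le) ?_
  exact le_of_tendsto hlim (Filter.Eventually.of_forall fun m => le_ciSup hbdd m)
end

section
/- The pair (a, b) = (1 - 1/√2, 1/√2) is the least nonnegative solution of the system a = (1/2)(a² + b²), b = 1/2 + a·b with a + b ≤ 1. -/
theorem stmt_10 :
    IsLeast {q : ℝ × ℝ | 0 ≤ q.1 ∧ 0 ≤ q.2 ∧
        q.1 = (1/2) * (q.1 ^ 2 + q.2 ^ 2) ∧ q.2 = 1/2 + q.1 * q.2 ∧ q.1 + q.2 ≤ 1}
      (1 - 1 / Real.sqrt 2, 1 / Real.sqrt 2) := by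
  have hs0 : (0:ℝ) < Real.sqrt 2 := Real.sqrt_pos.mpr (by norm_num)
  have hs2 : (Real.sqrt 2) ^ 2 = 2 := Real.sq_sqrt (by norm_num)
  set s := Real.sqrt 2 with hs
  have hs1 : 1 / s = s / 2 := by field_simp; nlinarith
  constructor
  · refine ⟨?_, ?_, ?_, ?_, ?_⟩ <;> simp only
    · rw [hs1]; nlinarith
    · positivity
    · field_simp; nlinarith
    · field_simp; nlinarith
    · rw [hs1]; ring_nf; nlinarith
  · rintro ⟨a, b⟩ ⟨h0a, h0b, ha, hb, hab⟩
    simp only at h0a h0b ha hb hab ⊢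
    -- b*(1-a) = 1/2, (1-a)^2 = 1 - b^2, 1-a ≥ b
    have key : b * (1 - a) = 1/2 := by nlinarith
    have h1a : (1 - a)^2 = 1 - b^2 := by nlinarith
    have hb2 : b^2 = 1/2 := by nlinarith [sq_nonneg (2*b^2 - 1), sq_nonneg (b*(1-a))]
    have hbs : b * s = 1 := by nlinarith [sq_nonneg (b*s - 1), mul_nonneg h0b hs0.le]
    have hbval : b = 1 / s := by field_simp; linarith [mul_comm b s]
    constructor
    ·
      have : (1 - a) * (2 * b) = 1 := by linarith [key]
      rw [hbval] at this
      have : 1 - a = s / 2 := by field_simp at this; nlinarith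
      rw [hs1]; linarith
    · rw [hbval]
end
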